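/- arXiv:2210.02679 — 3 statements merged into one kernel-verified Lean document; each statement's English description precedes it below -/
import Mathlib

section
/- Let Γ be a simple graph with no isolated vertices, let G ≤ Aut(Γ) be arc-transitive on Γ, let B be a block system for G on VΓ, and let Γ_B be the quotient graph. For a vertex α, let ᾱ ∈ B denote the block containing α and let Σ(ᾱ) denote the set of blocks adjacent to ᾱ in Γ_B. Then for every vertex α the following are equivalent: (a) for every pair of blocks B₁, B₂ adjacent in Γ_B, every vertex of B₁ has the same positive number of neighbours in B₂ as every other vertex of B₁ ∪ B₂ has in the opposite block (the induced subgraph of Γ between B₁ and B₂ is regular, i.e. Γ is a multicover of Γ_B); (b) for every block B' ∈ Σ(ᾱ), the vertex α has a neighbour in B'; (c) the stabilizer G_α acts transitively on Σ(ᾱ). -/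
/-!
Arc-transitivity makes the number of neighbours of `x` in the block of `y` the same for every
arc `(x, y)`, and makes `G` transitive on vertices. If some vertex, hence every vertex, has a
neighbour in each block adjacent to its own, then each vertex sees each adjacent block through
an arc, which yields (a) with that single count. (b) ⇒ (c) carries one arc at `α` to another by
an element fixing `α`; conversely (c) moves one arc at `α` into every adjacent block, and that
arc leaves the block of `α` because some arc of `Γ` joins distinct blocks.
-/

/-- The quotient graph of a graph by a partition (given as a setoid): two classes are
adjacent iff they are distinct and contain some pair of adjacent vertices. -/
def quotGraph {V : Type*} (Γ : SimpleGraph V) (B : Setoid V) : SimpleGraph (Quotient B) where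
  Adj x y := x ≠ y ∧ ∃ a b : V, Quotient.mk B a = x ∧ Quotient.mk B b = y ∧ Γ.Adj a b
  symm := by
    constructor
    rintro x y ⟨hne, a, b, ha, hb, hab⟩
    exact ⟨hne.symm, b, a, hb, ha, hab.symm⟩
  loopless := by
    constructor
    rintro x ⟨hne, -⟩
    exact hne rfl

section

open Pointwise

variable {V G : Type*} [Group G] [MulAction G V] {Γ : SimpleGraph V} {B : Setoid V}

def nbrsInBlock (Γ : SimpleGraph V) (B : Setoid V) (x w : V) : Set V :=
  {c | B.r w c ∧ Γ.Adj x c}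

/-- Property (b) of the theorem at the vertex `x`. -/
def HasNbrInAdjBlocks (Γ : SimpleGraph V) (B : Setoid V) (x : V) : Prop :=
  ∀ b : V, (quotGraph Γ B).Adj (Quotient.mk B x) (Quotient.mk B b) → ∃ c : V, B.r b c ∧ Γ.Adj x c

lemma quotGraph_adj_mk_iff {a b : V} :
    (quotGraph Γ B).Adj (Quotient.mk B a) (Quotient.mk B b) ↔
      ¬ B.r a b ∧ ∃ a' b', B.r a a' ∧ B.r b b' ∧ Γ.Adj a' b' := by
  simp only [quotGraph, ne_eq, Quotient.eq]
  exact and_congr_right fun _ =>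
    ⟨fun ⟨a', b', ha, hb, h⟩ => ⟨a', b', B.symm ha, B.symm hb, h⟩,
     fun ⟨a', b', ha, hb, h⟩ => ⟨a', b', B.symm ha, B.symm hb, h⟩⟩

lemma smul_rel_smul_iff (hinv : ∀ (g : G) (a b : V), B.r a b → B.r (g • a) (g • b))
    (g : G) {a b : V} : B.r (g • a) (g • b) ↔ B.r a b :=
  ⟨fun h => by simpa using hinv g⁻¹ _ _ h, hinv g a b⟩

lemma quotGraph_adj_smul (hact : ∀ (g : G) (a b : V), Γ.Adj (g • a) (g • b) ↔ Γ.Adj a b)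
    (hinv : ∀ (g : G) (a b : V), B.r a b → B.r (g • a) (g • b)) (g : G) {a b : V}
    (hab : (quotGraph Γ B).Adj (Quotient.mk B a) (Quotient.mk B b)) :
    (quotGraph Γ B).Adj (Quotient.mk B (g • a)) (Quotient.mk B (g • b)) := by
  obtain ⟨hne, a', b', ha, hb, h⟩ := quotGraph_adj_mk_iff.mp hab
  exact quotGraph_adj_mk_iff.mpr ⟨(smul_rel_smul_iff hinv g).not.mpr hne, g • a', g • b',
    hinv g _ _ ha, hinv g _ _ hb, (hact g a' b').mpr h⟩

lemma nbrsInBlock_smul (hact : ∀ (g : G) (a b : V), Γ.Adj (g • a) (g • b) ↔ Γ.Adj a b)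
    (hinv : ∀ (g : G) (a b : V), B.r a b → B.r (g • a) (g • b)) (g : G) (x w : V) :
    nbrsInBlock Γ B (g • x) (g • w) = g • nbrsInBlock Γ B x w := by
  ext c
  rw [Set.mem_smul_set_iff_inv_smul_mem]
  conv_lhs => rw [← smul_inv_smul g c]
  exact and_congr (smul_rel_smul_iff hinv g) (hact g _ _)

lemma nbrsInBlock_congr {w w' : V} (x : V) (h : B.r w w') :
    nbrsInBlock Γ B x w = nbrsInBlock Γ B x w' := by
  ext c
  exact and_congr_left fun _ => ⟨B.trans (B.symm h), B.trans h⟩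

lemma ncard_nbrsInBlock_eq_of_adj
    (hact : ∀ (g : G) (a b : V), Γ.Adj (g • a) (g • b) ↔ Γ.Adj a b)
    (hinv : ∀ (g : G) (a b : V), B.r a b → B.r (g • a) (g • b))
    (harc : ∀ a b c d : V, Γ.Adj a b → Γ.Adj c d → ∃ g : G, g • a = c ∧ g • b = d)
    {x y x' y' : V} (hxy : Γ.Adj x y) (hxy' : Γ.Adj x' y') :
    (nbrsInBlock Γ B x y).ncard = (nbrsInBlock Γ B x' y').ncard := by
  obtain ⟨g, rfl, rfl⟩ := harc x y x' y' hxy hxy'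
  rw [nbrsInBlock_smul hact hinv, Set.ncard_smul_set]

lemma exists_smul_eq_of_arc_transitive (hnoiso : ∀ v : V, ∃ w : V, Γ.Adj v w)
    (harc : ∀ a b c d : V, Γ.Adj a b → Γ.Adj c d → ∃ g : G, g • a = c ∧ g • b = d)
    (x y : V) : ∃ g : G, g • x = y := by
  obtain ⟨x', hx⟩ := hnoiso x
  obtain ⟨y', hy⟩ := hnoiso y
  obtain ⟨g, hg, -⟩ := harc x x' y y' hx hy
  exact ⟨g, hg⟩

lemma not_rel_of_adj (hinv : ∀ (g : G) (a b : V), B.r a b → B.r (g • a) (g • b))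
    (harc : ∀ a b c d : V, Γ.Adj a b → Γ.Adj c d → ∃ g : G, g • a = c ∧ g • b = d)
    {a₀ b₀ x y : V} (h₀ : Γ.Adj a₀ b₀) (hn₀ : ¬ B.r a₀ b₀) (hxy : Γ.Adj x y) : ¬ B.r x y := by
  obtain ⟨g, rfl, rfl⟩ := harc x y a₀ b₀ hxy h₀
  exact fun h => hn₀ (hinv g x y h)

lemma HasNbrInAdjBlocks.smul (hact : ∀ (g : G) (a b : V), Γ.Adj (g • a) (g • b) ↔ Γ.Adj a b)
    (hinv : ∀ (g : G) (a b : V), B.r a b → B.r (g • a) (g • b)) {x : V}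
    (hx : HasNbrInAdjBlocks Γ B x) (g : G) : HasNbrInAdjBlocks Γ B (g • x) := by
  intro b hb
  have hb' := quotGraph_adj_smul hact hinv g⁻¹ hb
  rw [inv_smul_smul] at hb'
  obtain ⟨c, hbc, hxc⟩ := hx _ hb'
  refine ⟨g • c, by simpa using hinv g _ _ hbc, (hact g x c).mpr hxc⟩

lemma hasNbrInAdjBlocks_of_multicover {x : V}
    (h : ∀ b : V, (quotGraph Γ B).Adj (Quotient.mk B x) (Quotient.mk B b) →
      ∃ k : ℕ, 0 < k ∧ (∀ x' : V, B.r x x' → (nbrsInBlock Γ B x' b).ncard = k) ∧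
        (∀ b' : V, B.r b b' → (nbrsInBlock Γ B b' x).ncard = k)) :
    HasNbrInAdjBlocks Γ B x := by
  intro b hb
  obtain ⟨k, hk, hx, -⟩ := h b hb
  exact Set.nonempty_of_ncard_ne_zero (hx x (B.refl x) ▸ hk.ne')

lemma stabilizer_transitive_of_hasNbrInAdjBlocks
    (hinv : ∀ (g : G) (a b : V), B.r a b → B.r (g • a) (g • b))
    (harc : ∀ a b c d : V, Γ.Adj a b → Γ.Adj c d → ∃ g : G, g • a = c ∧ g • b = d)
    {α : V} (hα : HasNbrInAdjBlocks Γ B α) (b c : V)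
    (hb : (quotGraph Γ B).Adj (Quotient.mk B α) (Quotient.mk B b))
    (hc : (quotGraph Γ B).Adj (Quotient.mk B α) (Quotient.mk B c)) :
    ∃ g : G, g • α = α ∧ B.r (g • b) c := by
  obtain ⟨b', hbb', hαb'⟩ := hα b hb
  obtain ⟨c', hcc', hαc'⟩ := hα c hc
  obtain ⟨g, hgα, hgb'⟩ := harc α b' α c' hαb' hαc'
  exact ⟨g, hgα, B.trans (hgb' ▸ hinv g _ _ hbb') (B.symm hcc')⟩

lemma hasNbrInAdjBlocks_of_stabilizer_transitive
    (hact : ∀ (g : G) (a b : V), Γ.Adj (g • a) (g • b) ↔ Γ.Adj a b)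
    (hinv : ∀ (g : G) (a b : V), B.r a b → B.r (g • a) (g • b))
    (harc : ∀ a b c d : V, Γ.Adj a b → Γ.Adj c d → ∃ g : G, g • a = c ∧ g • b = d)
    (hnoiso : ∀ v : V, ∃ w : V, Γ.Adj v w)
    {a₀ b₀ : V} (h₀ : Γ.Adj a₀ b₀) (hn₀ : ¬ B.r a₀ b₀) {α : V}
    (hα : ∀ b c : V, (quotGraph Γ B).Adj (Quotient.mk B α) (Quotient.mk B b) →
      (quotGraph Γ B).Adj (Quotient.mk B α) (Quotient.mk B c) →
      ∃ g : G, g • α = α ∧ B.r (g • b) c) :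
    HasNbrInAdjBlocks Γ B α := by
  obtain ⟨w, hαw⟩ := hnoiso α
  have hw : (quotGraph Γ B).Adj (Quotient.mk B α) (Quotient.mk B w) :=
    quotGraph_adj_mk_iff.mpr
      ⟨not_rel_of_adj hinv harc h₀ hn₀ hαw, α, w, B.refl α, B.refl w, hαw⟩
  intro c hc
  obtain ⟨g, hgα, hgw⟩ := hα w c hw hc
  exact ⟨g • w, B.symm hgw, hgα ▸ (hact g α w).mpr hαw⟩

lemma ncard_nbrsInBlock_eq_of_quotGraph_adj
    (hact : ∀ (g : G) (a b : V), Γ.Adj (g • a) (g • b) ↔ Γ.Adj a b)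
    (hinv : ∀ (g : G) (a b : V), B.r a b → B.r (g • a) (g • b))
    (harc : ∀ a b c d : V, Γ.Adj a b → Γ.Adj c d → ∃ g : G, g • a = c ∧ g • b = d)
    (hnbr : ∀ x, HasNbrInAdjBlocks Γ B x) {a₀ b₀ x w : V} (h₀ : Γ.Adj a₀ b₀)
    (hxw : (quotGraph Γ B).Adj (Quotient.mk B x) (Quotient.mk B w)) :
    (nbrsInBlock Γ B x w).ncard = (nbrsInBlock Γ B a₀ b₀).ncard := by
  obtain ⟨d, hwd, hxd⟩ := hnbr x w hxw
  rw [nbrsInBlock_congr x hwd]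
  exact ncard_nbrsInBlock_eq_of_adj hact hinv harc hxd h₀

lemma multicover_of_forall_hasNbrInAdjBlocks [Finite V]
    (hact : ∀ (g : G) (a b : V), Γ.Adj (g • a) (g • b) ↔ Γ.Adj a b)
    (hinv : ∀ (g : G) (a b : V), B.r a b → B.r (g • a) (g • b))
    (harc : ∀ a b c d : V, Γ.Adj a b → Γ.Adj c d → ∃ g : G, g • a = c ∧ g • b = d)
    (hnbr : ∀ x, HasNbrInAdjBlocks Γ B x) {a b : V}
    (hab : (quotGraph Γ B).Adj (Quotient.mk B a) (Quotient.mk B b)) :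
    ∃ k : ℕ, 0 < k ∧ (∀ a' : V, B.r a a' → (nbrsInBlock Γ B a' b).ncard = k) ∧
      (∀ b' : V, B.r b b' → (nbrsInBlock Γ B b' a).ncard = k) := by
  obtain ⟨-, a₀, b₀, -, -, h₀⟩ := quotGraph_adj_mk_iff.mp hab
  refine ⟨(nbrsInBlock Γ B a₀ b₀).ncard, (Set.ncard_pos).mpr ⟨b₀, B.refl b₀, h₀⟩,
    fun a' ha' => ?_, fun b' hb' => ?_⟩
  · rw [Quotient.sound ha'] at hab
    exact ncard_nbrsInBlock_eq_of_quotGraph_adj hact hinv harc hnbr h₀ hab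
  · rw [Quotient.sound hb'] at hab
    rw [ncard_nbrsInBlock_eq_of_quotGraph_adj hact hinv harc hnbr h₀.symm hab.symm]
    exact ncard_nbrsInBlock_eq_of_adj hact hinv harc h₀.symm h₀

end

theorem multicover_criterion_general {V : Type*} [Fintype V] (Γ : SimpleGraph V)
    (G : Type*) [Group G] [MulAction G V]
    (hact : ∀ (g : G) (a b : V), Γ.Adj (g • a) (g • b) ↔ Γ.Adj a b)
    (hnoiso : ∀ v : V, ∃ w : V, Γ.Adj v w)
    (harc : ∀ a b c d : V, Γ.Adj a b → Γ.Adj c d → ∃ g : G, g • a = c ∧ g • b = d)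
    (B : Setoid V)
    (hinv : ∀ (g : G) (a b : V), B.r a b → B.r (g • a) (g • b))
    (α : V) :
    [(∀ a b : V, (quotGraph Γ B).Adj (Quotient.mk B a) (Quotient.mk B b) →
        ∃ k : ℕ, 0 < k ∧
          (∀ a' : V, B.r a a' → ({c : V | B.r b c ∧ Γ.Adj a' c}).ncard = k) ∧
          (∀ b' : V, B.r b b' → ({c : V | B.r a c ∧ Γ.Adj b' c}).ncard = k)),
     (∀ b : V, (quotGraph Γ B).Adj (Quotient.mk B α) (Quotient.mk B b) →
        ∃ c : V, B.r b c ∧ Γ.Adj α c),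
     (∀ b c : V, (quotGraph Γ B).Adj (Quotient.mk B α) (Quotient.mk B b) →
        (quotGraph Γ B).Adj (Quotient.mk B α) (Quotient.mk B c) →
        ∃ g : G, g • α = α ∧ B.r (g • b) c)].TFAE := by
  tfae_have 1 → 2 := fun h => hasNbrInAdjBlocks_of_multicover (h α)
  tfae_have 2 → 3 := stabilizer_transitive_of_hasNbrInAdjBlocks hinv harc
  tfae_have 3 → 1 := by
    intro hα a b hab
    obtain ⟨hn, a₀, b₀, ha, hb, h₀⟩ := quotGraph_adj_mk_iff.mp hab
    have hn₀ : ¬ B.r a₀ b₀ := fun h => hn (B.trans ha (B.trans h (B.symm hb)))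
    have hnbrα := hasNbrInAdjBlocks_of_stabilizer_transitive hact hinv harc hnoiso h₀ hn₀ hα
    have hnbr : ∀ x, HasNbrInAdjBlocks Γ B x := fun x => by
      obtain ⟨g, rfl⟩ := exists_smul_eq_of_arc_transitive hnoiso harc α x
      exact hnbrα.smul hact hinv g
    exact multicover_of_forall_hasNbrInAdjBlocks hact hinv harc hnbr hab
  tfae_finish

/-- **Lemma 3.1.**  Let `Γ` be a (finite) graph with no isolated vertices, `G ≤ Aut Γ`
arc-transitive, `B` a block system for `G` on the vertices, and `α` a vertex.  Then the
following are equivalent: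
(a) `Γ` is a multicover of `Γ_B` (between any two adjacent blocks the induced subgraph
    is regular of positive degree);
(b) `α` has a neighbour in every block adjacent to its own block `ᾱ`;
(c) the stabilizer `G_α` is transitive on the neighbours of `ᾱ` in `Γ_B`. -/
theorem multicover_criterion {V : Type*} [Fintype V] (Γ : SimpleGraph V)
    (G : Type*) [Group G] [MulAction G V] [FaithfulSMul G V]
    (hact : ∀ (g : G) (a b : V), Γ.Adj (g • a) (g • b) ↔ Γ.Adj a b)
    (hnoiso : ∀ v : V, ∃ w : V, Γ.Adj v w)
    (harc : ∀ a b c d : V, Γ.Adj a b → Γ.Adj c d → ∃ g : G, g • a = c ∧ g • b = d)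
    (B : Setoid V)
    (hinv : ∀ (g : G) (a b : V), B.r a b → B.r (g • a) (g • b))
    (α : V) :
    [(∀ a b : V, (quotGraph Γ B).Adj (Quotient.mk B a) (Quotient.mk B b) →
        ∃ k : ℕ, 0 < k ∧
          (∀ a' : V, B.r a a' → ({c : V | B.r b c ∧ Γ.Adj a' c}).ncard = k) ∧
          (∀ b' : V, B.r b b' → ({c : V | B.r a c ∧ Γ.Adj b' c}).ncard = k)),
     (∀ b : V, (quotGraph Γ B).Adj (Quotient.mk B α) (Quotient.mk B b) →
        ∃ c : V, B.r b c ∧ Γ.Adj α c),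
     (∀ b c : V, (quotGraph Γ B).Adj (Quotient.mk B α) (Quotient.mk B b) →
        (quotGraph Γ B).Adj (Quotient.mk B α) (Quotient.mk B c) →
        ∃ g : G, g • α = α ∧ B.r (g • b) c)].TFAE :=
  multicover_criterion_general Γ G hact hnoiso harc B hinv α
end

section
/- With the Praeger–Xu setup, let g = g_2 = xy, let H = H_2 = ⟨a_i : 1 ≤ i ≤ r−2⟩⋊⟨y⟩, and let T = ⟨a_0·a_{r−1}, a_1, …, a_{r−2}⟩⋊⟨y⟩, i.e. the set of elements (v, t) with v ∈ M satisfying v_0 = v_{r−1} and t ∈ {1, y}. Then: T is a subgroup of G of order 2p^{r−1} containing H, so |G : T| = rp; T ∩ T^g has order p^{r−2}, so |T : T ∩ T^g| = 2p; M ∩ T ≠ 1; and H ∩ T^g = H ∩ H^g. Consequently the Praeger–Xu graph C(p,r,2) = Cos(G, H, HgH) is a G-symmetric cover of Cos(G, T, TgT) (which is the wreath graph W(r,p)). -/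
open Multiplicative

/-- The conjugate subgroup `H^g = g⁻¹ H g`. -/
def conjSG {G : Type*} [Group G] (H : Subgroup G) (g : G) : Subgroup G :=
  Subgroup.comap (MulAut.conj g).toMonoidHom H

/-- membership of the double coset `H g H`. -/
def inDC {G : Type*} [Group G] (H : Subgroup G) (g z : G) : Prop :=
  ∃ h ∈ H, ∃ h' ∈ H, z = h * g * h'

/-- The coset graph `Cos(G,H,HgH)` on the coset space `G/H`: distinct cosets `xH` and `yH`
are adjacent iff `x⁻¹y ∈ HgH`.  (The symmetrised form of the adjacency relation below is
equal to this condition whenever `g² ∈ H`, since then `(HgH)⁻¹ = HgH`.) -/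
def cosetGraph {G : Type*} [Group G] (H : Subgroup G) (g : G) : SimpleGraph (G ⧸ H) where
  Adj a b := a ≠ b ∧ ∃ x y : G, (x : G ⧸ H) = a ∧ (y : G ⧸ H) = b ∧
      (inDC H g (x⁻¹ * y) ∨ inDC H g (y⁻¹ * x))
  symm := by
    constructor
    rintro a b ⟨hne, x, y, hx, hy, h⟩
    exact ⟨hne.symm, y, x, hy, hx, h.symm⟩
  loopless := by
    constructor
    rintro a ⟨hne, -⟩
    exact hne rfl

/-- The natural permutation action of the dihedral group on `ZMod n`:
`r i` acts by `k ↦ k + i` and `sr i` acts by `k ↦ -k - i`. -/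
def dihedralPerm (n : ℕ) : DihedralGroup n →* Equiv.Perm (ZMod n) where
  toFun t :=
    match t with
    | .r i => Equiv.addRight i
    | .sr i => (Equiv.neg (ZMod n)).trans (Equiv.addRight (-i))
  map_one' := by
    show Equiv.addRight (0 : ZMod n) = 1
    ext k
    simp
  map_mul' s t := by
    rcases s with i | i <;> rcases t with j | j <;> ext k <;>
      simp [DihedralGroup.r_mul_r, DihedralGroup.r_mul_sr, DihedralGroup.sr_mul_r,
        DihedralGroup.sr_mul_sr, Equiv.addRight] <;> ring

/-- A permutation of the index type acts on the direct power `ι → A` as a group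
automorphism, by permuting coordinates. -/
def permAut {ι A : Type*} [CommGroup A] : Equiv.Perm ι →* MulAut (ι → A) where
  toFun σ :=
    { toFun := fun v => v ∘ σ.symm
      invFun := fun v => v ∘ σ
      left_inv := fun v => by ext k; simp
      right_inv := fun v => by ext k; simp
      map_mul' := fun v w => rfl }
  map_one' := by ext v k; rfl
  map_mul' σ τ := by ext v k; rfl

/-- the group `M ≅ ℤ_p^r` (indices mod `r`, written multiplicatively). -/
abbrev PXM (r p : ℕ) : Type := ZMod r → Multiplicative (ZMod p)

/-- the action of `T = D_{2r} = ⟨x,y⟩` on `M`, with `a_i ^ x = a_{i+1}` and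
`a_i ^ y = a_{r-1-i}`. -/
def PXphi (r p : ℕ) : DihedralGroup r →* MulAut (PXM r p) :=
  permAut.comp (dihedralPerm r)

/-- the group `G = M ⋊ T ≅ ℤ_p^r ⋊ D_{2r}` of the Praeger–Xu setup. -/
abbrev PXG (r p : ℕ) : Type := SemidirectProduct (PXM r p) (DihedralGroup r) (PXphi r p)

/-- the standard generator `a_i` of `M`. -/
def PXa (r p : ℕ) (i : ZMod r) : PXM r p := fun k => if k = i then ofAdd 1 else 1

/-- the element `x` of `T ≤ G` (rotation: `a_i ^ x = a_{i+1}`). -/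
def PXx (r p : ℕ) : PXG r p := SemidirectProduct.inr (DihedralGroup.r 1)

/-- the element `y` of `T ≤ G` (reflection: `a_i ^ y = a_{r-1-i}`). -/
def PXy (r p : ℕ) : PXG r p := SemidirectProduct.inr (DihedralGroup.sr 1)

/-- the subgroup `H_s ≤ G` of the Praeger–Xu setup:
`H_s = ⟨a_i : s/2 ≤ i < r - s/2⟩ ⋊ ⟨y⟩` for `s` even, and
`H_s = ⟨a_i : (s-1)/2 ≤ i < r - (s+1)/2⟩ ⋊ ⟨xy⟩` for `s` odd. -/
def PXH (r p s : ℕ) : Subgroup (PXG r p) :=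
  if s % 2 = 0 then
    Subgroup.closure
      ((fun i : ℕ => SemidirectProduct.inl (PXa r p i)) '' {i : ℕ | s / 2 ≤ i ∧ i < r - s / 2}
        ∪ {PXy r p})
  else
    Subgroup.closure
      ((fun i : ℕ => SemidirectProduct.inl (PXa r p i)) ''
          {i : ℕ | (s - 1) / 2 ≤ i ∧ i < r - (s + 1) / 2}
        ∪ {PXx r p * PXy r p})

/-- the element `g_s ∈ G` of the Praeger–Xu setup: `g_s = xy` for `s` even and
`g_s = y` for `s` odd. -/
def PXg (r p s : ℕ) : PXG r p :=
  if s % 2 = 0 then PXx r p * PXy r p else PXy r p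

/-- the subgroup `T = ⟨a_0 a_{r-1}, a_1, …, a_{r-2}⟩ ⋊ ⟨y⟩` of `G`. -/
def PXT (r p : ℕ) : Subgroup (PXG r p) :=
  Subgroup.closure
    ({SemidirectProduct.inl (PXa r p 0 * PXa r p ((r - 1 : ℕ) : ZMod r))}
      ∪ (fun i : ℕ => SemidirectProduct.inl (PXa r p i)) '' {i : ℕ | 1 ≤ i ∧ i ≤ r - 2}
      ∪ {PXy r p})

/-!
In coordinates, `y = sr 1` acts on indices by `k ↦ -k - 1`, `g = xy = sr 0` by `k ↦ -k`, and
the index `r - 1` is `-1`. Both `T` and `H = H₂` are semidirect products `N' ⋊ ⟨y⟩`, with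
`N' = {v | v 0 = v (-1)}` resp. `{v | v 0 = v (-1) = 1}`, and conjugating by `g` moves the
condition at `-1` to `1` and `⟨y⟩` to `⟨sr (-1)⟩`. As `sr 1 ≠ sr (-1)` for `r ≥ 3`, the
intersections `T ∩ T^g` and `H ∩ H^g` lie in `M` and are cut out by conditions at `0, ±1`.
All orders are counts of functions with prescribed coordinates, the indices follow from
`|A ∩ B| · |A : A ∩ B| = |A|`, and `H ∩ T^g = H ∩ H^g` because `v 0 = 1` turns `v 0 = v 1`
into `v 1 = 1`.
-/

namespace Subgroup

theorem mem_zpowers_iff_of_orderOf_eq_two {G : Type*} [Group G] {x y : G}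
    (hx : orderOf x = 2) : y ∈ zpowers x ↔ y = 1 ∨ y = x := by
  classical
  rw [(orderOf_pos_iff.1 (hx ▸ two_pos)).mem_zpowers_iff_mem_range_orderOf, hx]
  simp [Finset.range_add_one, eq_comm, or_comm]

theorem relIndex_eq_of_card_inf_mul {G : Type*} [Group G] {H K : Subgroup G} {n : ℕ}
    (h : Nat.card ↥(H ⊓ K) * n = Nat.card H) (h₀ : Nat.card ↥(H ⊓ K) ≠ 0) :
    K.relIndex H = n := by
  refine Nat.eq_of_mul_eq_mul_left (Nat.pos_of_ne_zero h₀) ?_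
  rw [h, ← relIndex_bot_left, ← relIndex_bot_left, ← inf_relIndex_left H K,
    relIndex_mul_relIndex ⊥ (H ⊓ K) H bot_le inf_le_left]

variable {ι A : Type*} [Group A]

def piEqAt (i₀ : ι) (D : Set ι) : Subgroup (ι → A) where
  carrier := {v | ∀ i ∈ D, v i₀ = v i}
  one_mem' := fun _ _ => rfl
  mul_mem' := fun hv hw i hi => congr_arg₂ (· * ·) (hv i hi) (hw i hi)
  inv_mem' := fun hv i hi => congr_arg (·⁻¹) (hv i hi)

@[simp]
theorem mem_piEqAt {i₀ : ι} {D : Set ι} {v : ι → A} : v ∈ piEqAt i₀ D ↔ ∀ i ∈ D, v i₀ = v i :=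
  Iff.rfl

variable [Finite ι]

theorem card_piEqAt {i₀ : ι} {D : Set ι} (h : i₀ ∉ D) :
    Nat.card (piEqAt (A := A) i₀ D) = Nat.card A ^ (Nat.card ι - D.ncard) := by
  classical
  have e : piEqAt (A := A) i₀ D ≃ (↥Dᶜ → A) :=
    { toFun := fun v i => v.1 i
      invFun := fun f => ⟨fun i => if hi : i ∈ D then f ⟨i₀, h⟩ else f ⟨i, hi⟩,
        fun i hi => by simp [h, hi]⟩
      left_inv := fun v => by
        ext i
        by_cases hi : i ∈ D
        · simp [hi, v.2 i hi]
        · simp [hi]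
      right_inv := fun f => by
        ext i
        exact dif_neg i.2 }
  rw [Nat.card_congr e, Nat.card_fun, Nat.card_coe_set_eq, Set.ncard_compl]

theorem card_pi_bot (D : Set ι) :
    Nat.card (pi D fun _ => (⊥ : Subgroup A)) = Nat.card A ^ (Nat.card ι - D.ncard) := by
  classical
  have e : (pi D fun _ => (⊥ : Subgroup A)) ≃ (↥Dᶜ → A) :=
    { toFun := fun v i => v.1 i
      invFun := fun f => ⟨fun i => if hi : i ∈ D then 1 else f ⟨i, hi⟩, fun i hi => by simp [hi]⟩
      left_inv := fun v => by
        ext i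
        by_cases hi : i ∈ D
        · simp [hi, mem_bot.1 (v.2 i hi)]
        · simp [hi]
      right_inv := fun f => by
        ext i
        exact dif_neg i.2 }
  rw [Nat.card_congr e, Nat.card_fun, Nat.card_coe_set_eq, Set.ncard_compl]

end Subgroup

theorem mem_conjSG {G : Type*} [Group G] {H : Subgroup G} {g z : G} :
    z ∈ conjSG H g ↔ g * z * g⁻¹ ∈ H :=
  Iff.rfl

namespace SemidirectProduct

variable {N G : Type*} [Group N] [Group G] {φ : G →* MulAut N}

def prodSubgroup (N' : Subgroup N) (K : Subgroup G) (hK : ∀ k ∈ K, ∀ n ∈ N', φ k n ∈ N') :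
    Subgroup (N ⋊[φ] G) where
  carrier := {z | z.left ∈ N' ∧ z.right ∈ K}
  one_mem' := ⟨N'.one_mem, K.one_mem⟩
  mul_mem' := fun ⟨hn, hk⟩ ⟨hn', hk'⟩ => ⟨N'.mul_mem hn (hK _ hk _ hn'), K.mul_mem hk hk'⟩
  inv_mem' := fun ⟨hn, hk⟩ => ⟨hK _ (K.inv_mem hk) _ (N'.inv_mem hn), K.inv_mem hk⟩

theorem bot_map_mem (N' : Subgroup N) : ∀ k ∈ (⊥ : Subgroup G), ∀ n ∈ N', φ k n ∈ N' := by
  rintro k hk n hn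
  rwa [Subgroup.mem_bot.1 hk, map_one, MulAut.one_apply]

variable {N' : Subgroup N} {K : Subgroup G} {hK : ∀ k ∈ K, ∀ n ∈ N', φ k n ∈ N'}

@[simp]
theorem mem_prodSubgroup {z : N ⋊[φ] G} :
    z ∈ prodSubgroup N' K hK ↔ z.left ∈ N' ∧ z.right ∈ K :=
  Iff.rfl

theorem card_prodSubgroup : Nat.card (prodSubgroup N' K hK) = Nat.card N' * Nat.card K := by
  rw [← Nat.card_prod]
  exact Nat.card_congr
    { toFun := fun z => (⟨z.1.left, z.2.1⟩, ⟨z.1.right, z.2.2⟩)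
      invFun := fun w => ⟨⟨w.1, w.2⟩, w.1.2, w.2.2⟩
      left_inv := fun _ => rfl
      right_inv := fun _ => rfl }

end SemidirectProduct

namespace ZMod

variable {n : ℕ} [NeZero n]

theorem natCast_sub_one_eq_neg_one : ((n - 1 : ℕ) : ZMod n) = -1 := by
  rw [Nat.cast_sub NeZero.one_le, natCast_self, Nat.cast_one, zero_sub]

theorem natCast_image_Icc_eq_compl : ((↑) : ℕ → ZMod n) '' Set.Icc 1 (n - 2) = {0, -1}ᶜ := by
  ext k
  simp only [Set.mem_image, Set.mem_Icc, Set.mem_compl_iff, Set.mem_insert_iff,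
    Set.mem_singleton_iff, not_or, eq_neg_iff_add_eq_zero]
  constructor
  · rintro ⟨i, ⟨hi₁, hi₂⟩, rfl⟩
    rw [← Nat.cast_succ, natCast_eq_zero_iff, natCast_eq_zero_iff]
    exact ⟨Nat.not_dvd_of_pos_of_lt (by omega) (by omega),
      Nat.not_dvd_of_pos_of_lt (by omega) (by omega)⟩
  · rintro ⟨h₀, h₁⟩
    have hval : k.val + 1 ≠ n := fun h => h₁ <| by
      rw [← natCast_zmod_val k, ← Nat.cast_add_one, h, natCast_self]
    refine ⟨k.val, ⟨Nat.one_le_iff_ne_zero.2 ((val_eq_zero k).not.2 h₀), ?_⟩, natCast_zmod_val k⟩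
    have := val_lt k
    omega

end ZMod

namespace PraegerXu

open SemidirectProduct DihedralGroup Subgroup

variable {r p : ℕ}

instance [Fact (2 < r)] : NeZero r := NeZero.of_gt (Fact.out : 2 < r)

instance [Fact (2 < r)] : Nontrivial (ZMod r) :=
  ZMod.nontrivial_iff.2 (by have := Fact.out (p := 2 < r); omega)

theorem PXphi_sr_apply (i : ZMod r) (v : PXM r p) (k : ZMod r) :
    PXphi r p (sr i) v k = v (-k - i) := by
  show v _ = _
  congr 1
  simp [dihedralPerm, Equiv.addRight]
  ring

theorem PXa_eq_mulSingle (i : ZMod r) : PXa r p i = Pi.mulSingle i (ofAdd 1) := by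
  ext k
  simp [PXa, Pi.mulSingle_apply]

theorem PXg_two : PXg r p 2 = inr (sr 0) := by
  simp [PXg, PXx, PXy, ← map_mul]

theorem mem_zpowers_sr_one {t : DihedralGroup r} : t ∈ zpowers (sr 1) ↔ t = 1 ∨ t = sr 1 :=
  mem_zpowers_iff_of_orderOf_eq_two (orderOf_sr 1)

theorem conj_sr_zero_mem_zpowers_sr_one {t : DihedralGroup r} :
    sr 0 * t * (sr 0)⁻¹ ∈ zpowers (sr 1) ↔ t = 1 ∨ t = sr (-1) := by
  rw [mem_zpowers_sr_one]
  rcases t with j | j <;> simp [neg_eq_iff_eq_neg, one_def, -r_zero]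

theorem card_multiplicative_zmod : Nat.card (Multiplicative (ZMod p)) = p := by
  rw [Nat.card_congr Multiplicative.toAdd, Nat.card_zmod]

theorem exists_ofAdd_one_zpow_eq (x : Multiplicative (ZMod p)) : ∃ n : ℤ, ofAdd 1 ^ n = x := by
  obtain ⟨n, hn⟩ := ZMod.intCast_surjective (toAdd x)
  exact ⟨n, by rw [← ofAdd_zsmul, zsmul_one, hn, ofAdd_toAdd]⟩

theorem mulSingle_mem {S : Subgroup (PXM r p)} {i : ZMod r} (h : PXa r p i ∈ S)
    (x : Multiplicative (ZMod p)) : Pi.mulSingle i x ∈ S := by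
  obtain ⟨n, rfl⟩ := exists_ofAdd_one_zpow_eq x
  rw [Pi.mulSingle_zpow, ← PXa_eq_mulSingle]
  exact zpow_mem h n

theorem mulSingle_mul_mulSingle_mem {S : Subgroup (PXM r p)} {i j : ZMod r}
    (h : PXa r p i * PXa r p j ∈ S) (x : Multiplicative (ZMod p)) :
    Pi.mulSingle i x * Pi.mulSingle j x ∈ S := by
  obtain ⟨n, rfl⟩ := exists_ofAdd_one_zpow_eq x
  rw [Pi.mulSingle_zpow, Pi.mulSingle_zpow, ← mul_zpow, ← PXa_eq_mulSingle, ← PXa_eq_mulSingle]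
  exact zpow_mem h n

theorem PXT_eq_closure [NeZero r] :
    PXT r p = closure ({inl (PXa r p 0 * PXa r p (-1))} ∪
      (fun i => inl (PXa r p i)) '' ({0, -1} : Set (ZMod r))ᶜ ∪ {PXy r p}) := by
  rw [PXT, ZMod.natCast_sub_one_eq_neg_one,
    ← ZMod.natCast_image_Icc_eq_compl, ← Set.image_comp]
  rfl

theorem PXH_two_eq_closure [NeZero r] :
    PXH r p 2 = closure ((fun i => inl (PXa r p i)) '' ({0, -1} : Set (ZMod r))ᶜ ∪ {PXy r p}) := by
  have hset : {i : ℕ | 2 / 2 ≤ i ∧ i < r - 2 / 2} = Set.Icc 1 (r - 2) := by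
    ext i
    simp only [Set.mem_ofPred_eq, Set.mem_Icc]
    omega
  rw [PXH, if_pos rfl, hset, ← ZMod.natCast_image_Icc_eq_compl, ← Set.image_comp]
  rfl

theorem PXphi_mem_piEqAt : ∀ k ∈ zpowers (sr 1 : DihedralGroup r), ∀ v ∈ piEqAt 0 {-1},
    PXphi r p k v ∈ piEqAt 0 {-1} := by
  intro k hk v hv
  rcases mem_zpowers_sr_one.1 hk with rfl | rfl
  · simpa using hv
  · simp_all [PXphi_sr_apply]

theorem PXphi_mem_pi_bot : ∀ k ∈ zpowers (sr 1 : DihedralGroup r),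
    ∀ v ∈ pi {0, -1} fun _ => ⊥, PXphi r p k v ∈ pi {0, -1} fun _ => ⊥ := by
  intro k hk v hv
  rcases mem_zpowers_sr_one.1 hk with rfl | rfl
  · simpa using hv
  · simp_all [mem_pi, PXphi_sr_apply]

theorem PXH_two_le_PXT [NeZero r] : PXH r p 2 ≤ PXT r p := by
  rw [PXH_two_eq_closure, PXT_eq_closure]
  exact closure_mono (Set.union_subset_union_left _ Set.subset_union_right)

variable [Fact (2 < r)]

theorem inl_mem_PXT {v : PXM r p} (hv : v 0 = v (-1)) : inl v ∈ PXT r p := by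
  rw [← mem_comap, ← Finset.univ_prod_mulSingle v, ← Finset.prod_mul_prod_compl {0, -1},
    Finset.prod_pair (by simp), ← hv, PXT_eq_closure]
  refine mul_mem (mulSingle_mul_mulSingle_mem (mem_comap.2 (Subgroup.subset_closure ?_)) _)
    (prod_mem fun i hi => mulSingle_mem (mem_comap.2 (Subgroup.subset_closure ?_)) _)
  · exact Or.inl (Or.inl rfl)
  · exact Or.inl (Or.inr ⟨i, by simpa using hi, rfl⟩)

theorem inl_mem_PXH_two {v : PXM r p} (h₀ : v 0 = 1) (h₁ : v (-1) = 1) : inl v ∈ PXH r p 2 := by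
  rw [← mem_comap]
  refine pi_mem_of_mulSingle_mem v fun i => ?_
  by_cases hi : i = 0 ∨ i = -1
  · rcases hi with rfl | rfl <;> simp [h₀, h₁]
  · rw [PXH_two_eq_closure]
    refine mulSingle_mem (mem_comap.2 (Subgroup.subset_closure ?_)) _
    exact Or.inl ⟨i, hi, rfl⟩

theorem PXT_eq : PXT r p = prodSubgroup (piEqAt 0 {-1}) (zpowers (sr 1)) PXphi_mem_piEqAt := by
  apply le_antisymm
  · rw [PXT_eq_closure, closure_le]
    rintro z ((rfl | ⟨i, hi, rfl⟩) | rfl)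
    · simp [PXa_eq_mulSingle, Pi.mulSingle_apply]
    · simp_all [PXa_eq_mulSingle, eq_comm]
    · simp [PXy]
  · rintro z ⟨hleft, hright⟩
    have hy : PXy r p ∈ PXT r p := by rw [PXT_eq_closure]; exact Subgroup.subset_closure (by simp)
    rw [← inl_left_mul_inr_right z]
    exact mul_mem (inl_mem_PXT (by simpa using hleft))
      ((zpowers_le.2 hy : zpowers (sr 1) ≤ (PXT r p).comap inr) hright)

theorem PXH_two_eq :
    PXH r p 2 = prodSubgroup (pi {0, -1} fun _ => ⊥) (zpowers (sr 1)) PXphi_mem_pi_bot := by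
  apply le_antisymm
  · rw [PXH_two_eq_closure, closure_le]
    rintro z (⟨i, hi, rfl⟩ | rfl)
    · simp_all [PXa_eq_mulSingle, mem_pi, eq_comm]
    · simp [PXy]
  · rintro z ⟨hleft, hright⟩
    have hy : PXy r p ∈ PXH r p 2 := by
      rw [PXH_two_eq_closure]; exact Subgroup.subset_closure (by simp)
    rw [← inl_left_mul_inr_right z]
    simp only [mem_pi, Set.mem_insert_iff, Set.mem_singleton_iff, forall_eq_or_imp, forall_eq,
      mem_bot] at hleft
    exact mul_mem (inl_mem_PXH_two hleft.1 hleft.2)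
      ((zpowers_le.2 hy : zpowers (sr 1) ≤ (PXH r p 2).comap inr) hright)

theorem mem_PXT {z : PXG r p} :
    z ∈ PXT r p ↔ z.left 0 = z.left (-1) ∧ z.right ∈ zpowers (sr 1) := by
  simp [PXT_eq]

theorem mem_PXH_two {z : PXG r p} :
    z ∈ PXH r p 2 ↔ z.left 0 = 1 ∧ z.left (-1) = 1 ∧ z.right ∈ zpowers (sr 1) := by
  simp [PXH_two_eq, mem_pi, and_assoc]

theorem mem_conjSG_PXT {z : PXG r p} :
    z ∈ conjSG (PXT r p) (PXg r p 2) ↔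
      z.left 0 = z.left 1 ∧ z.right ∈ conjSG (zpowers (sr 1)) (sr 0) := by
  simp [PXT_eq, PXg_two, PXphi_sr_apply, mem_conjSG]

theorem mem_conjSG_PXH_two {z : PXG r p} :
    z ∈ conjSG (PXH r p 2) (PXg r p 2) ↔
      z.left 0 = 1 ∧ z.left 1 = 1 ∧ z.right ∈ conjSG (zpowers (sr 1)) (sr 0) := by
  simp [PXH_two_eq, PXg_two, PXphi_sr_apply, mem_conjSG, mem_pi, and_assoc]

theorem zpowers_sr_one_inf_conjSG :
    zpowers (sr 1 : DihedralGroup r) ⊓ conjSG (zpowers (sr 1)) (sr 0) = ⊥ := by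
  ext t
  rw [mem_inf, mem_conjSG, conj_sr_zero_mem_zpowers_sr_one, mem_zpowers_sr_one, mem_bot]
  constructor
  · rintro ⟨rfl | rfl, h⟩
    · rfl
    · simp [(ZMod.neg_one_ne_one (n := r)).symm, one_def, -r_zero] at h
  · rintro rfl
    simp

theorem PXT_inf_conjSG : PXT r p ⊓ conjSG (PXT r p) (PXg r p 2) =
    prodSubgroup (piEqAt 0 {-1, 1}) ⊥ (bot_map_mem _) := by
  ext z
  rw [mem_inf, mem_PXT, mem_conjSG_PXT, and_and_and_comm, ← mem_inf, zpowers_sr_one_inf_conjSG]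
  simp

theorem PXH_two_inf_conjSG : PXH r p 2 ⊓ conjSG (PXH r p 2) (PXg r p 2) =
    prodSubgroup (pi {0, -1, 1} fun _ => ⊥) ⊥ (bot_map_mem _) := by
  ext z
  have key := SetLike.ext_iff.1 (zpowers_sr_one_inf_conjSG (r := r)) z.right
  simp only [mem_inf, mem_bot] at key
  simp only [mem_inf, mem_PXH_two, mem_conjSG_PXH_two, mem_prodSubgroup, mem_pi, mem_bot,
    Set.mem_insert_iff, Set.mem_singleton_iff, forall_eq_or_imp, forall_eq, ← key]
  tauto

theorem PXH_two_inf_conjSG_PXT : PXH r p 2 ⊓ conjSG (PXT r p) (PXg r p 2) =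
    PXH r p 2 ⊓ conjSG (PXH r p 2) (PXg r p 2) := by
  ext z
  simp only [mem_inf, mem_PXH_two, mem_conjSG_PXT, mem_conjSG_PXH_two]
  constructor
  · rintro ⟨⟨h₀, h₁, ht⟩, h₀₁, ht'⟩
    exact ⟨⟨h₀, h₁, ht⟩, h₀, h₀₁ ▸ h₀, ht'⟩
  · rintro ⟨⟨h₀, h₁, ht⟩, -, h₁', ht'⟩
    exact ⟨⟨h₀, h₁, ht⟩, h₀.trans h₁'.symm, ht'⟩

theorem card_PXT : Nat.card (PXT r p) = 2 * p ^ (r - 1) := by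
  rw [PXT_eq, card_prodSubgroup, card_piEqAt (by simp), Nat.card_zpowers,
    orderOf_sr, card_multiplicative_zmod, Nat.card_zmod, Set.ncard_singleton, mul_comm]

theorem card_PXH_two : Nat.card (PXH r p 2) = 2 * p ^ (r - 2) := by
  rw [PXH_two_eq, card_prodSubgroup, card_pi_bot, Nat.card_zpowers, orderOf_sr,
    card_multiplicative_zmod, Nat.card_zmod, Set.ncard_pair (by simp), mul_comm]

theorem card_PXT_inf_conjSG :
    Nat.card (PXT r p ⊓ conjSG (PXT r p) (PXg r p 2) : Subgroup (PXG r p)) = p ^ (r - 2) := by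
  rw [PXT_inf_conjSG, card_prodSubgroup, card_piEqAt (by simp), card_bot,
    card_multiplicative_zmod, Nat.card_zmod, Set.ncard_pair ZMod.neg_one_ne_one, mul_one]

theorem card_PXH_two_inf_conjSG :
    Nat.card (PXH r p 2 ⊓ conjSG (PXH r p 2) (PXg r p 2) : Subgroup (PXG r p)) = p ^ (r - 3) := by
  rw [PXH_two_inf_conjSG, card_prodSubgroup, card_pi_bot, card_bot, card_multiplicative_zmod,
    Nat.card_zmod, Set.ncard_insert_of_notMem (by simp),
    Set.ncard_pair ZMod.neg_one_ne_one, mul_one]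

theorem inl_range_inf_PXT_ne_bot (hp : p ≠ 1) :
    (inl : PXM r p →* PXG r p).range ⊓ PXT r p ≠ ⊥ := by
  have := ZMod.nontrivial_iff.2 hp
  have ha : inl (PXa r p 1) ∈ (inl : PXM r p →* PXG r p).range ⊓ PXT r p :=
    ⟨⟨_, rfl⟩, inl_mem_PXT (by simp [PXa, ZMod.neg_one_ne_one (n := r)])⟩
  refine ne_bot_iff_exists_ne_one.2 ⟨⟨_, ha⟩, fun h => ?_⟩
  simpa [PXa] using congr_fun (inl_injective (congr_arg Subtype.val h)) 1

theorem index_PXT [NeZero p] : (PXT r p).index = r * p := by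
  have h := card_mul_index (PXT r p)
  rw [card_PXT, SemidirectProduct.card, Nat.card_fun, card_multiplicative_zmod, Nat.card_zmod,
    DihedralGroup.nat_card, ← pow_sub_one_mul (NeZero.ne r)] at h
  refine Nat.eq_of_mul_eq_mul_left (by simp [Nat.pos_of_neZero]) (h.trans ?_)
  ring

theorem relIndex_conjSG_PXT [NeZero p] :
    (conjSG (PXT r p) (PXg r p 2)).relIndex (PXT r p) = 2 * p := by
  have : 2 < r := Fact.out
  refine relIndex_eq_of_card_inf_mul ?_ ?_ <;> rw [card_PXT_inf_conjSG]
  · rw [card_PXT, show r - 1 = r - 2 + 1 by omega]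
    ring
  · exact pow_ne_zero _ (NeZero.ne p)

theorem relIndex_conjSG_PXH_two [NeZero p] :
    (conjSG (PXH r p 2) (PXg r p 2)).relIndex (PXH r p 2) = 2 * p := by
  have : 2 < r := Fact.out
  refine relIndex_eq_of_card_inf_mul ?_ ?_ <;> rw [card_PXH_two_inf_conjSG]
  · rw [card_PXH_two, show r - 2 = r - 3 + 1 by omega]
    ring
  · exact pow_ne_zero _ (NeZero.ne p)

end PraegerXu

/-- **Theorem 4.2(c).**  For a prime `p` and `r ≥ 3`, with `g = g_2 = xy` and
`H = H_2 = ⟨a_1, …, a_{r-2}⟩ ⋊ ⟨y⟩`, the subgroup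
`T = ⟨a_0 a_{r-1}, a_1, …, a_{r-2}⟩ ⋊ ⟨y⟩` — concretely, the set of elements `(v, t)`
with `v_0 = v_{r-1}` and `t ∈ {1, y}` — satisfies:  `H ≤ T`, `|T| = 2 p^{r-1}` (so
`|G : T| = r p`), `|T ∩ T^g| = p^{r-2}` (so `|T : T ∩ T^g| = 2p`), `M ∩ T ≠ 1`, and
`H ∩ T^g = H ∩ H^g`.  By the criterion of Theorem 1.2 (the valencies being equal),
this says exactly that the Praeger–Xu graph `C(p,r,2) = Cos(G, H, HgH)` is a
`G`-symmetric cover of `Cos(G, T, TgT)`, the wreath graph `W(r,p)`. -/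
theorem praeger_xu_cover (p r : ℕ) (hp : p.Prime) (hr : 3 ≤ r) :
    (∀ z : PXG r p, z ∈ PXT r p ↔
      (z.left 0 = z.left ((r - 1 : ℕ) : ZMod r) ∧
        (z.right = 1 ∨ z.right = DihedralGroup.sr 1))) ∧
    PXH r p 2 ≤ PXT r p ∧
    Nat.card (PXT r p) = 2 * p ^ (r - 1) ∧
    (PXT r p).index = r * p ∧
    Nat.card (PXT r p ⊓ conjSG (PXT r p) (PXg r p 2) : Subgroup (PXG r p)) = p ^ (r - 2) ∧
    (conjSG (PXT r p) (PXg r p 2)).relIndex (PXT r p) = 2 * p ∧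
    (conjSG (PXH r p 2) (PXg r p 2)).relIndex (PXH r p 2) = 2 * p ∧
    (SemidirectProduct.inl : PXM r p →* PXG r p).range ⊓ PXT r p ≠ ⊥ ∧
    PXH r p 2 ⊓ conjSG (PXT r p) (PXg r p 2) =
      PXH r p 2 ⊓ conjSG (PXH r p 2) (PXg r p 2) := by
  have : Fact (2 < r) := ⟨hr⟩
  have : NeZero p := ⟨hp.ne_zero⟩
  refine ⟨fun z => ?_, PraegerXu.PXH_two_le_PXT, PraegerXu.card_PXT, PraegerXu.index_PXT,
    PraegerXu.card_PXT_inf_conjSG, PraegerXu.relIndex_conjSG_PXT,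
    PraegerXu.relIndex_conjSG_PXH_two, PraegerXu.inl_range_inf_PXT_ne_bot hp.ne_one,
    PraegerXu.PXH_two_inf_conjSG_PXT⟩
  rw [PraegerXu.mem_PXT, ZMod.natCast_sub_one_eq_neg_one, PraegerXu.mem_zpowers_sr_one]
end

section
/- Let Σ be a finite connected simple graph that is regular of valency 4, let G ≤ Aut(Σ) be arc-transitive on Σ, and let ω be a vertex. Assume the vertex stabilizer G_ω is a (finite) 2-group with |G_ω| < 16. Then G_ω^{[1]} = 1 (G_ω acts faithfully on the neighbour set Σ(ω)), and G_ω is isomorphic to the dihedral group of order 8, to Z₂ × Z₂, or to Z₄. -/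
/-!
`G_ω` permutes the four neighbours of `ω` transitively, so `|G_ω| = 4 |G_{ωα}|` for a neighbour
`α`; as a `2`-group of order less than `16`, `G_ω` has order `4` or `8`.

If `|G_ω| = 4`, the arc stabilizer `G_{ωα}`, which contains `G_ω^{[1]}`, is trivial, and a group
of order `4` is `ℤ₂ × ℤ₂` or `ℤ₄`.

If `|G_ω| = 8`, every arc stabilizer has order `2`. Were `G_ω^{[1]}` nontrivial, so would be each
conjugate `G_v^{[1]}`, forcing `G_v^{[1]} = G_{vw} = G_w^{[1]}` along every edge `vw`; by
connectedness this single nontrivial subgroup would fix every vertex, contradicting faithfulness.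
So `G_ω` embeds into `Sym(Σ(ω)) ≅ S₄` with order `8`, i.e. as a Sylow `2`-subgroup, which is
dihedral.
-/

/-- The pointwise stabilizer `G_ω^{[1]}` of the neighbourhood of `ω` within the vertex
stabilizer `G_ω`: the subgroup of elements fixing `ω` and all of its neighbours. -/
def pstab {V : Type*} (Sg : SimpleGraph V) (G : Type*) [Group G] [MulAction G V] (ω : V) :
    Subgroup G :=
  MulAction.stabilizer G ω ⊓ ⨅ v ∈ Sg.neighborSet ω, MulAction.stabilizer G v

open MulAction

lemma Subgroup.eq_of_le_of_prime_card {G : Type*} [Group G] {H K : Subgroup G} (hle : H ≤ K)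
    (hK : (Nat.card K).Prime) (hH : H ≠ ⊥) : H = K := by
  have : Finite K := Nat.finite_of_card_ne_zero hK.ne_zero
  refine Subgroup.eq_of_le_of_card_ge hle (le_of_eq ?_)
  refine ((hK.eq_one_or_self_of_dvd _ (Subgroup.card_dvd_of_le hle)).resolve_left ?_).symm
  rwa [Subgroup.card_eq_one]

lemma nonempty_mulEquiv_of_isPGroup_of_not_dvd_index {P : Type*} [Group P] {p : ℕ}
    [Fact p.Prime] [Finite (Sylow p P)] {H K : Subgroup P} (hH : IsPGroup p H)
    (hK : IsPGroup p K) (hHi : ¬ p ∣ H.index) (hKi : ¬ p ∣ K.index) : Nonempty (H ≃* K) :=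
  ⟨Sylow.equiv (hH.toSylow hHi) (hK.toSylow hKi)⟩

lemma nonempty_mulEquiv_of_card_eq_four {H : Type*} [Group H] (hH : Nat.card H = 4) :
    Nonempty (H ≃* Multiplicative (ZMod 2 × ZMod 2)) ∨
      Nonempty (H ≃* Multiplicative (ZMod 4)) := by
  have : Finite H := Nat.finite_of_card_ne_zero (by omega)
  by_cases hcyc : ∃ x : H, orderOf x = 4
  · obtain ⟨x, hx⟩ := hcyc
    have : IsCyclic H := isCyclic_of_orderOf_eq_card x (hx.trans hH.symm)
    exact .inr ⟨mulEquivOfCyclicCardEq (by rw [hH, Nat.card_eq_fintype_card]; rfl)⟩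
  · push Not at hcyc
    have hdvd : Monoid.exponent H ∣ 2 := Monoid.exponent_dvd.2 fun g => by
      have h4 : orderOf g ∣ 4 := hH ▸ orderOf_dvd_natCard g
      have := Nat.le_of_dvd (by norm_num) h4
      interval_cases h : orderOf g <;> simp_all
    have hne : Monoid.exponent H ≠ 1 := by
      rw [Ne, Monoid.exp_eq_one_iff, ← Finite.card_le_one_iff_subsingleton]
      omega
    have : IsKleinFour H := ⟨hH, ((Nat.dvd_prime Nat.prime_two).1 hdvd).resolve_left hne⟩
    exact .inl IsKleinFour.nonempty_mulEquiv

def dihedralFourToPerm : DihedralGroup 4 →* Equiv.Perm (Fin 4) where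
  toFun
    | .r i => finRotate 4 ^ i.val
    | .sr i => Equiv.swap 1 3 * finRotate 4 ^ i.val
  map_one' := by decide
  map_mul' := by decide

lemma dihedralFourToPerm_injective : Function.Injective dihedralFourToPerm := by decide

lemma not_two_dvd_index_of_card_eq_eight {H : Subgroup (Equiv.Perm (Fin 4))}
    (hH : Nat.card H = 8) : ¬ 2 ∣ H.index := by
  have h : 8 * H.index = 24 := by
    rw [← hH, H.card_mul_index, Nat.card_perm, Nat.card_fin]; rfl
  omega

lemma nonempty_mulEquiv_dihedralGroup_four {H α : Type*} [Group H] [Finite α]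
    (hα : Nat.card α = 4) (φ : H →* Equiv.Perm α) (hφ : Function.Injective φ)
    (hH : Nat.card H = 8) : Nonempty (H ≃* DihedralGroup 4) := by
  let e := (Finite.equivFinOfCardEq hα).permCongrHom
  let ψ := e.toMonoidHom.comp φ
  have hψ : Function.Injective ψ := e.injective.comp hφ
  have hcardψ : Nat.card ψ.range = 8 := by
    rw [← hH, ← Nat.card_congr (MonoidHom.ofInjective hψ).toEquiv]
  have hcardD : Nat.card dihedralFourToPerm.range = 8 := by
    rw [← Nat.card_congr (MonoidHom.ofInjective dihedralFourToPerm_injective).toEquiv,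
      DihedralGroup.nat_card]
  obtain ⟨f⟩ := nonempty_mulEquiv_of_isPGroup_of_not_dvd_index
    (IsPGroup.of_card (n := 3) hcardψ) (IsPGroup.of_card (n := 3) hcardD)
    (not_two_dvd_index_of_card_eq_eight hcardψ) (not_two_dvd_index_of_card_eq_eight hcardD)
  exact ⟨((MonoidHom.ofInjective hψ).trans f).trans
    (MonoidHom.ofInjective dihedralFourToPerm_injective).symm⟩

lemma eq_one_or_two_of_two_pow_eq_four_mul {n m : ℕ} (h : 2 ^ n = 4 * m) (h16 : 2 ^ n < 16) :
    m = 1 ∨ m = 2 := by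
  have : n < 4 := (Nat.pow_lt_pow_iff_right (by norm_num)).1 (h16.trans_eq (by norm_num))
  interval_cases n <;> omega

section ArcTransitive

variable {V G : Type*} {Sg : SimpleGraph V} [Group G] [MulAction G V]

lemma mem_pstab {g : G} {ω : V} :
    g ∈ pstab Sg G ω ↔ g • ω = ω ∧ ∀ v, Sg.Adj ω v → g • v = v := by
  simp [pstab, Subgroup.mem_inf, Subgroup.mem_iInf, mem_stabilizer_iff,
    SimpleGraph.mem_neighborSet]

lemma pstab_le_stabilizer_inf {v w : V} (h : Sg.Adj v w) :
    pstab Sg G v ≤ stabilizer G v ⊓ stabilizer G w :=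
  fun _ hg => ⟨(mem_pstab.1 hg).1, (mem_pstab.1 hg).2 w h⟩

lemma pstab_le_of_walk (h : ∀ v w, Sg.Adj v w → pstab Sg G v ≤ pstab Sg G w) {u v : V}
    (p : Sg.Walk u v) : pstab Sg G u ≤ pstab Sg G v := by
  induction p with
  | nil => exact le_rfl
  | cons hadj _ ih => exact (h _ _ hadj).trans ih

lemma pstab_eq_bot_of_forall_adj_le [FaithfulSMul G V] (hconn : Sg.Connected)
    (h : ∀ v w, Sg.Adj v w → pstab Sg G v ≤ pstab Sg G w) (ω : V) : pstab Sg G ω = ⊥ :=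
  (Subgroup.eq_bot_iff_forall _).2 fun g hg => eq_of_smul_eq_smul fun v => by
    rw [one_smul]
    exact (mem_pstab.1 (pstab_le_of_walk h (hconn.preconnected ω v).some hg)).1

lemma isPretransitive_of_arcTransitive
    (harc : ∀ a b c d : V, Sg.Adj a b → Sg.Adj c d → ∃ g : G, g • a = c ∧ g • b = d)
    (hdeg : ∀ v, ∃ w, Sg.Adj v w) : IsPretransitive G V where
  exists_smul_eq v w := by
    obtain ⟨v', hv⟩ := hdeg v
    obtain ⟨w', hw⟩ := hdeg w
    obtain ⟨g, hg, -⟩ := harc _ _ _ _ hv hw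
    exact ⟨g, hg⟩

lemma card_inf_stabilizer_eq
    (harc : ∀ a b c d : V, Sg.Adj a b → Sg.Adj c d → ∃ g : G, g • a = c ∧ g • b = d)
    {v w v' w' : V} (h : Sg.Adj v w) (h' : Sg.Adj v' w') :
    Nat.card (stabilizer G v' ⊓ stabilizer G w' : Subgroup G) =
      Nat.card (stabilizer G v ⊓ stabilizer G w : Subgroup G) := by
  obtain ⟨g, rfl, rfl⟩ := harc v w v' w' h h'
  rw [stabilizer_smul_eq_stabilizer_map_conj, stabilizer_smul_eq_stabilizer_map_conj,
    ← Subgroup.map_inf _ _ _ (MulAut.conj g).injective,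
    Subgroup.card_map_of_injective (MulAut.conj g).injective]

variable (hact : ∀ (g : G) (a b : V), Sg.Adj (g • a) (g • b) ↔ Sg.Adj a b)
include hact

lemma pstab_smul (g : G) (v : V) :
    pstab Sg G (g • v) = (pstab Sg G v).map (MulAut.conj g).toMonoidHom := by
  ext x
  rw [Subgroup.mem_map_equiv, mem_pstab, mem_pstab, (MulAction.surjective g).forall]
  simp only [MulAut.conj_symm_apply, hact, mul_smul, inv_smul_eq_iff]

lemma pstab_eq_bot_of_prime_card_inf [FaithfulSMul G V] [IsPretransitive G V]
    (hconn : Sg.Connected)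
    (hprime : ∀ v w, Sg.Adj v w →
      (Nat.card (stabilizer G v ⊓ stabilizer G w : Subgroup G)).Prime)
    (ω : V) : pstab Sg G ω = ⊥ := by
  by_contra hω
  have hne (v : V) : pstab Sg G v ≠ ⊥ := by
    obtain ⟨g, rfl⟩ := exists_smul_eq G ω v
    rwa [pstab_smul hact, Ne, Subgroup.map_eq_bot_iff_of_injective _ (MulAut.conj g).injective]
  have hinf {v w : V} (hvw : Sg.Adj v w) : pstab Sg G v = stabilizer G v ⊓ stabilizer G w :=
    Subgroup.eq_of_le_of_prime_card (pstab_le_stabilizer_inf hvw) (hprime v w hvw) (hne v)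
  refine hω (pstab_eq_bot_of_forall_adj_le hconn (fun v w hvw => ?_) ω)
  rw [hinf hvw, hinf hvw.symm, inf_comm]

def neighborSetSubMulAction (ω : V) : SubMulAction (stabilizer G ω) V where
  carrier := Sg.neighborSet ω
  smul_mem' g v hv := by
    have := (hact g ω v).2 hv
    rwa [g.2] at this

lemma toPermHom_neighborSet_injective {ω : V} (h : pstab Sg G ω = ⊥) :
    Function.Injective (toPermHom (stabilizer G ω) (neighborSetSubMulAction hact ω)) := by
  rw [← MonoidHom.ker_eq_bot_iff, eq_bot_iff]
  intro g hg
  have : (g : G) ∈ pstab Sg G ω :=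
    mem_pstab.2 ⟨g.2, fun v hv => congrArg Subtype.val (Equiv.congr_fun hg ⟨v, hv⟩)⟩
  rw [h] at this
  exact Subtype.ext this

lemma orbit_stabilizer_eq_neighborSet
    (harc : ∀ a b c d : V, Sg.Adj a b → Sg.Adj c d → ∃ g : G, g • a = c ∧ g • b = d)
    {v w : V} (h : Sg.Adj v w) : orbit (stabilizer G v) w = Sg.neighborSet v := by
  ext u
  constructor
  · rintro ⟨g, rfl⟩
    exact (neighborSetSubMulAction hact v).smul_mem g h
  · intro hu
    obtain ⟨g, hgv, hgw⟩ := harc v w v u h hu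
    exact ⟨⟨g, hgv⟩, hgw⟩

lemma card_stabilizer_eq_ncard_mul_card_inf
    (harc : ∀ a b c d : V, Sg.Adj a b → Sg.Adj c d → ∃ g : G, g • a = c ∧ g • b = d)
    {v w : V} (h : Sg.Adj v w) :
    Nat.card (stabilizer G v) =
      (Sg.neighborSet v).ncard * Nat.card (stabilizer G v ⊓ stabilizer G w : Subgroup G) := by
  have hidx := Subgroup.relIndex_mul_relIndex ⊥ (stabilizer G v ⊓ stabilizer G w)
    (stabilizer G v) bot_le inf_le_left
  rw [Subgroup.relIndex_bot_left, Subgroup.relIndex_bot_left, inf_comm,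
    Subgroup.inf_relIndex_right] at hidx
  rw [← hidx, mul_comm, inf_comm, ← orbit_stabilizer_eq_neighborSet hact harc h,
    ← index_stabilizer]
  rfl

end ArcTransitive

/-- **Lemma 5.2 (first part).**  Let `Sg` be a finite connected tetravalent graph,
`G ≤ Aut Sg` arc-transitive, and suppose the vertex stabilizer `G_ω` is a `2`-group of
order less than `16`.  Then `G_ω^{[1]} = 1` (so `G_ω` acts faithfully on the
neighbourhood `Sg(ω)`), and `G_ω` is isomorphic to `D₈`, `ℤ₂ × ℤ₂` or `ℤ₄`. -/
theorem small_tetravalent_stabilizer {V : Type*} [Fintype V] (Sg : SimpleGraph V)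
    {G : Type*} [Group G] [MulAction G V] [FaithfulSMul G V]
    (hact : ∀ (g : G) (a b : V), Sg.Adj (g • a) (g • b) ↔ Sg.Adj a b)
    (hconn : Sg.Connected)
    (hval : ∀ v : V, (Sg.neighborSet v).ncard = 4)
    (harc : ∀ a b c d : V, Sg.Adj a b → Sg.Adj c d → ∃ g : G, g • a = c ∧ g • b = d)
    (ω : V)
    (h2 : IsPGroup 2 (MulAction.stabilizer G ω))
    (hsmall : Nat.card (MulAction.stabilizer G ω) < 16) :
    pstab Sg G ω = ⊥ ∧
    (Nonempty (MulAction.stabilizer G ω ≃* DihedralGroup 4) ∨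
      Nonempty (MulAction.stabilizer G ω ≃* Multiplicative (ZMod 2 × ZMod 2)) ∨
      Nonempty (MulAction.stabilizer G ω ≃* Multiplicative (ZMod 4))) := by
  have : Finite G := Finite.of_injective _ (toPerm_injective (α := G) (β := V))
  have hdeg (v : V) : ∃ w, Sg.Adj v w :=
    Set.nonempty_of_ncard_ne_zero (s := Sg.neighborSet v) (by rw [hval]; norm_num)
  have : IsPretransitive G V := isPretransitive_of_arcTransitive harc hdeg
  obtain ⟨α, hα⟩ := hdeg ω
  have hcard := card_stabilizer_eq_ncard_mul_card_inf hact harc hα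
  rw [hval] at hcard
  obtain ⟨n, hn⟩ := h2.exists_card_eq
  rcases eq_one_or_two_of_two_pow_eq_four_mul (hn ▸ hcard) (hn ▸ hsmall) with hinf | hinf
  · have hbot : pstab Sg G ω = ⊥ :=
      le_bot_iff.1 <| (pstab_le_stabilizer_inf hα).trans (Subgroup.card_eq_one.1 hinf).le
    exact ⟨hbot, .inr (nonempty_mulEquiv_of_card_eq_four (by omega))⟩
  · have hbot : pstab Sg G ω = ⊥ := pstab_eq_bot_of_prime_card_inf hact hconn
      (fun v w h => by rw [card_inf_stabilizer_eq harc hα h, hinf]; exact Nat.prime_two) ω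
    have hnbhd : Nat.card (neighborSetSubMulAction hact ω) = 4 :=
      (Nat.card_coe_set_eq _).trans (hval ω)
    exact ⟨hbot, .inl (nonempty_mulEquiv_dihedralGroup_four hnbhd _
      (toPermHom_neighborSet_injective hact hbot) (by omega))⟩
end
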